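/- The distribution π is stationary for the transition matrix P: πP = π, i.e., for every state (l,k) ∈ Ω, ∑_{(i,j) ∈ Ω} π(i,j)·P((i,j),(l,k)) = π(l,k). -/

import Mathlib

open Finset

namespace RWStmt

variable {V : Type*} [Fintype V] [DecidableEq V]

/-- Out-neighbors: `N_out(v) = {u : (v,u) ∈ E}`. -/
def Nout (E : Finset (V × V)) (v : V) : Finset V :=
  Finset.univ.filter fun u => (v, u) ∈ E

/-- In-neighbors: `N_in(v) = {u : (u,v) ∈ E}`. -/
def Nin (E : Finset (V × V)) (v : V) : Finset V :=
  Finset.univ.filter fun u => (u, v) ∈ E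

/-- Neighbors: `N(v) = N_out(v) ∪ N_in(v)`. -/
def Nbr (E : Finset (V × V)) (v : V) : Finset V :=
  Nout E v ∪ Nin E v

/-- Total degree: `d_sum(v) = d_out(v) + d_in(v)`. -/
def dsum (E : Finset (V × V)) (v : V) : ℕ :=
  (Nout E v).card + (Nin E v).card

/-- Edge multiplicity: `m(i,j) = 𝟙[j ∈ N_out(i)] + 𝟙[j ∈ N_in(i)]`. -/
def edgeMul (E : Finset (V × V)) (i j : V) : ℝ :=
  (if j ∈ Nout E i then 1 else 0) + (if j ∈ Nin E i then 1 else 0)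

/-- State space `Ω = {(i,j) : (i,j) ∈ E or (j,i) ∈ E or i = j}`. -/
def states (E : Finset (V × V)) : Finset (V × V) :=
  Finset.univ.filter fun p => p ∈ E ∨ (p.2, p.1) ∈ E ∨ p.1 = p.2

/-- The graph is weakly connected: any two vertices are joined by a path in the
symmetric closure of the edge relation. -/
def WeaklyConnected (E : Finset (V × V)) : Prop :=
  ∀ i j : V, Relation.ReflTransGen (fun a b => (a, b) ∈ E ∨ (b, a) ∈ E) i j

/-- Transition matrix of the proposed sampling algorithm:
`P((i,j),(l,k)) = α·m(i,k)/d_sum(i)` if `l = i`;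
`(1-α)·m(i,k)/d_sum(i)` if `l = k` and `l ∈ N(i)`; else `0`. -/
noncomputable def trans (E : Finset (V × V)) (α : ℝ) (e e' : V × V) : ℝ :=
  if e'.1 = e.1 then α * edgeMul E e.1 e'.2 / (dsum E e.1 : ℝ)
  else if e'.1 = e'.2 ∧ e'.1 ∈ Nbr E e.1 then
    (1 - α) * edgeMul E e.1 e'.2 / (dsum E e.1 : ℝ)
  else 0

/-- The stationary distribution:
`π(i,j) = α·m(i,j)/(2|E|)` for `i ≠ j`, and `π(i,i) = (1-α)·d_sum(i)/(2|E|)`. -/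
noncomputable def statDist (E : Finset (V × V)) (α : ℝ) (e : V × V) : ℝ :=
  if e.1 = e.2 then (1 - α) * (dsum E e.1 : ℝ) / (2 * (E.card : ℝ))
  else α * edgeMul E e.1 e.2 / (2 * (E.card : ℝ))

/-! The transition out of `(i, j)` does not depend on `j`, and the `π`-mass of the row
`{(i, j)}` is `d(i) / 2|E|` (this is where the absence of self-loops enters). Hence
`(πP)(l, k) = Σ_i d(i) P(i, (l, k)) / 2|E|`, and the factor `d(i)` cancels the normalisation
of `P`: for `l ≠ k` only `i = l` contributes, giving `α m(l, k)`, while for `l = k` every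
neighbour `i` of `l` contributes `(1 - α) m(i, l)`, which sum to `(1 - α) d(l)`. -/

section

variable (E : Finset (V × V))

lemma edgeMul_eq (i j : V) :
    edgeMul E i j = (if (i, j) ∈ E then 1 else 0) + (if (j, i) ∈ E then 1 else 0) := by
  simp [edgeMul, Nout, Nin]

lemma edgeMul_self {E} (hE : ∀ v : V, (v, v) ∉ E) (i : V) : edgeMul E i i = 0 := by
  simp [edgeMul_eq, hE i]

lemma edgeMul_eq_zero_of_notMem_nbr {i j : V} (h : j ∉ Nbr E i) : edgeMul E i j = 0 := by
  simp only [Nbr, mem_union, not_or] at h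
  simp [edgeMul, h.1, h.2]

lemma sum_edgeMul_right (i : V) : ∑ j, edgeMul E i j = dsum E i := by
  simp only [edgeMul, sum_add_distrib, sum_boole, filter_univ_mem, dsum]
  push_cast; ring

lemma sum_edgeMul_left (j : V) : ∑ i, edgeMul E i j = dsum E j := by
  simp only [edgeMul_eq, sum_add_distrib, sum_boole, dsum, Nout, Nin]
  push_cast; ring

lemma edgeMul_eq_zero_of_dsum_eq_zero {i : V} (h : dsum E i = 0) (j : V) : edgeMul E i j = 0 := by
  have hnonneg : ∀ j ∈ univ, 0 ≤ edgeMul E i j := fun j _ => by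
    unfold edgeMul; positivity
  exact (sum_eq_zero_iff_of_nonneg hnonneg).mp (by rw [sum_edgeMul_right, h, Nat.cast_zero])
    j (mem_univ j)

-- Also at `dsum E i = 0`, where `/ 0` gives `0`: the row of `edgeMul` vanishes there.
lemma dsum_mul_div_dsum (c : ℝ) (i j : V) :
    dsum E i * (c * edgeMul E i j / dsum E i) = c * edgeMul E i j := by
  by_cases h : dsum E i = 0
  · simp [h, edgeMul_eq_zero_of_dsum_eq_zero E h]
  · exact mul_div_cancel₀ _ (Nat.cast_ne_zero.mpr h)

lemma dsum_mul_trans (α : ℝ) (i j l k : V) :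
    dsum E i * trans E α (i, j) (l, k) =
      if l = i then α * edgeMul E i k else if l = k then (1 - α) * edgeMul E i l else 0 := by
  simp only [trans]
  by_cases hli : l = i
  · simp only [if_pos hli, dsum_mul_div_dsum]
  by_cases hlk : l = k
  · subst hlk
    by_cases hnbr : l ∈ Nbr E i
    · simp [hli, hnbr, dsum_mul_div_dsum]
    · simp [hli, hnbr, edgeMul_eq_zero_of_notMem_nbr E hnbr]
  · simp [hli, hlk]

lemma sum_dsum_mul_trans {E} (hE : ∀ v : V, (v, v) ∉ E) (α : ℝ) (j l k : V) :
    ∑ i, dsum E i * trans E α (i, j) (l, k) =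
      if l = k then (1 - α) * dsum E l else α * edgeMul E l k := by
  simp only [dsum_mul_trans]
  split_ifs with hlk
  · subst hlk
    have hterm : ∀ i, (if l = i then α * edgeMul E i l else (1 - α) * edgeMul E i l)
        = (1 - α) * edgeMul E i l := fun i => by
      split_ifs with hli
      · simp [← hli, edgeMul_self hE]
      · rfl
    simp only [hterm, ← mul_sum, sum_edgeMul_left]
  · simp [sum_ite_eq]

lemma statDist_eq_zero_of_notMem_states (α : ℝ) {e : V × V} (he : e ∉ states E) :
    statDist E α e = 0 := by
  simp only [states, mem_filter, mem_univ, true_and, not_or] at he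
  simp [statDist, he.2.2, edgeMul_eq, he.1, he.2.1]

lemma sum_statDist_row {E} (hE : ∀ v : V, (v, v) ∉ E) (α : ℝ) (i : V) :
    ∑ j, statDist E α (i, j) = dsum E i / (2 * E.card) := by
  have hrow : ∀ j, statDist E α (i, j)
      = ((if i = j then (1 - α) * dsum E i else 0) + α * edgeMul E i j) / (2 * E.card) :=
    fun j => by
      unfold statDist
      split_ifs with hij
      · obtain rfl : i = j := hij
        simp [edgeMul_self hE]
      · simp
  simp only [hrow, ← sum_div, sum_add_distrib, sum_ite_eq, mem_univ, if_true, ← mul_sum,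
    sum_edgeMul_right]
  ring

end

theorem stmt_6_general (E : Finset (V × V)) (hE : ∀ v : V, (v, v) ∉ E) (α : ℝ) :
    ∀ e' ∈ states E, ∑ e ∈ states E, statDist E α e * trans E α e e'
      = statDist E α e' := by
  rintro ⟨l, k⟩ -
  calc ∑ e ∈ states E, statDist E α e * trans E α e (l, k)
      = ∑ e, statDist E α e * trans E α e (l, k) :=
        sum_subset (subset_univ _) fun e _ he => by
          rw [statDist_eq_zero_of_notMem_states E α he, zero_mul]
    _ = ∑ i, (∑ j, statDist E α (i, j)) * trans E α (i, k) (l, k) := by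
        -- `trans E α (i, j)` does not read `j`
        simp only [Fintype.sum_prod_type, sum_mul]
        rfl
    _ = (∑ i, dsum E i * trans E α (i, k) (l, k)) / (2 * E.card) := by
        simp only [sum_statDist_row hE, sum_div, div_mul_eq_mul_div]
    _ = statDist E α (l, k) := by
        rw [sum_dsum_mul_trans hE]
        unfold statDist
        split_ifs <;> rfl

/-- `π` is stationary for `P`: `πP = π`. -/
theorem stmt_6 (E : Finset (V × V)) (hE : ∀ v : V, (v, v) ∉ E)
    (hconn : WeaklyConnected E) (hcard : 2 ≤ Fintype.card V)
    (α : ℝ) (hα0 : 0 ≤ α) (hα1 : α < 1) :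
    ∀ e' ∈ states E, ∑ e ∈ states E, statDist E α e * trans E α e e'
      = statDist E α e' :=
  stmt_6_general E hE α

end RWStmt
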